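/- Let X be an open subset of ℝ^p (p ∈ ℕ), m ∈ ℕ ∪ {∞}, and let E and F be real Banach spaces. Suppose Φ : X × E → F is such that Tf(x) := Φ(x, f(x)) defines a linear operator T from C^m(X,E) into C^m(X,F) (i.e., x ↦ Φ(x, f(x)) belongs to C^m(X,F) for every f ∈ C^m(X,E), and T(af + bg) = aTf + bTg for all f, g ∈ C^m(X,E) and a, b ∈ ℝ). Then for every compact set K ⊆ X, the set of points x ∈ K at which the linear map u ↦ Φ(x,u) from E to F is not continuous is countable. -/

import Mathlib

/-!
If the discontinuity set were infinite, it would accumulate at some `x₀ ∈ K`, and we could pick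
points `yₙ` of it converging to `x₀`, so well separated that there are bumps `φₙ` with
`φₙ yₙ = 1` vanishing at all other `yⱼ`. A discontinuous linear map is unbounded on every ball,
so we may choose `vₙ` with `n < ‖Φ yₙ vₙ‖` and `‖vₙ‖` so small that `f = ∑ₙ φₙ • vₙ` is smooth.
Then `f yₙ = vₙ`, so `x ↦ Φ x (f x)` is unbounded along `yₙ → x₀`, yet continuous on `X`.
-/

open Set Filter Topology
open scoped ContDiff

theorem IsLinearMap.exists_mem_ball_lt_norm_of_not_continuous {𝕜 E F : Type*}
    [NontriviallyNormedField 𝕜] [NormedAddCommGroup E] [NormedSpace 𝕜 E]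
    [NormedAddCommGroup F] [NormedSpace 𝕜 F] {f : E → F} (hf : IsLinearMap 𝕜 f)
    (hfc : ¬ Continuous f) {r : ℝ} (hr : 0 < r) (M : ℝ) :
    ∃ v ∈ Metric.ball (0 : E) r, M < ‖f v‖ := by
  by_contra! hbdd
  obtain ⟨C, hC⟩ := (IsLinearMap.mk' f hf).bound_of_ball_bound hr M hbdd
  exact hfc (AddMonoidHomClass.continuous_of_bound (IsLinearMap.mk' f hf) C hC)

theorem exists_seq_tendsto_separated_of_accPt {α : Type*} [MetricSpace α] {x : α} {s : Set α}
    (hx : AccPt x (𝓟 s)) :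
    ∃ y : ℕ → α, (∀ n, y n ∈ s ∧ y n ≠ x) ∧ Tendsto y atTop (𝓝 x) ∧
      ∀ n j, n ≠ j → dist (y n) x / 2 ≤ dist (y j) (y n) := by
  have hnear : ∀ ε > 0, ∃ z : {z // z ∈ s ∧ z ≠ x}, dist z.1 x < ε := fun ε hε => by
    obtain ⟨z, ⟨hzε, hzs⟩, hzx⟩ := accPt_iff_nhds.1 hx _ (Metric.ball_mem_nhds x hε)
    exact ⟨⟨z, hzs, hzx⟩, hzε⟩
  choose next hnext using fun z : {z // z ∈ s ∧ z ≠ x} =>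
    hnear (dist z.1 x / 2) (half_pos (dist_pos.2 z.2.2))
  obtain ⟨z₀, -⟩ := hnear 1 one_pos
  set y : ℕ → α := fun n => (next^[n] z₀).1
  set d : ℕ → ℝ := fun n => dist (y n) x
  have hd_succ : ∀ n, d (n + 1) ≤ d n / 2 := fun n => by
    simpa only [d, y, Function.iterate_succ_apply'] using (hnext (next^[n] z₀)).le
  have hd_lt : ∀ n j, n < j → d j ≤ d n / 2 := fun n j hnj => by
    induction j, hnj using Nat.le_induction with
    | base => exact hd_succ n
    | succ j _ ih => linarith [hd_succ j, dist_nonneg (x := y (j + 1)) (y := x)]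
  have hd_geom : ∀ n, d n ≤ (1 / 2) ^ n * d 0 := fun n => by
    induction n with
    | zero => simp
    | succ n ih => rw [pow_succ]; linarith [hd_succ n]
  refine ⟨y, fun n => (next^[n] z₀).2, ?_, fun n j hnj => ?_⟩
  · refine tendsto_iff_dist_tendsto_zero.2 (squeeze_zero (fun n => dist_nonneg) hd_geom ?_)
    simpa using (tendsto_pow_atTop_nhds_zero_of_lt_one (by norm_num : (0 : ℝ) ≤ 1 / 2)
      (by norm_num)).mul_const (d 0)
  · rcases hnj.lt_or_gt with hlt | hgt
    · linarith [hd_lt n j hlt, dist_triangle (y n) (y j) x, dist_comm (y n) (y j)]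
    · linarith [hd_lt j n hgt, dist_triangle (y j) (y n) x, dist_nonneg (x := y n) (y := x)]

theorem exists_pos_forall_summable_mul (B : ℕ → ℕ → ℝ) :
    ∃ δ : ℕ → ℝ, (∀ n, 0 < δ n) ∧ ∀ k, Summable fun n => B k n * δ n := by
  set S : ℕ → ℝ := fun n => 1 + ∑ j ∈ Finset.range (n + 1), |B j n|
  have hS : ∀ n, 0 < S n := fun n => by positivity
  refine ⟨fun n => (1 / 2) ^ n / S n, fun n => div_pos (by positivity) (hS n), fun k => ?_⟩
  refine summable_geometric_two.of_norm_bounded_eventually_nat ?_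
  filter_upwards [eventually_ge_atTop k] with n hkn
  have hBS : |B k n| ≤ S n := by
    have := Finset.single_le_sum (f := fun j => |B j n|) (fun j _ => abs_nonneg _)
      (Finset.mem_range.2 (Nat.lt_succ_of_le hkn))
    simp only [S]
    linarith
  calc ‖B k n * ((1 / 2) ^ n / S n)‖ = |B k n| / S n * (1 / 2) ^ n := by
        rw [norm_mul, Real.norm_eq_abs, Real.norm_of_nonneg (div_pos (by positivity) (hS n)).le]
        ring
    _ ≤ 1 * (1 / 2) ^ n := by
        gcongr
        exact (div_le_one (hS n)).2 hBS
    _ = (1 / 2) ^ n := one_mul _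

theorem norm_iteratedFDeriv_smul_const_le {𝕜 G E : Type*} [NontriviallyNormedField 𝕜]
    [NormedAddCommGroup G] [NormedSpace 𝕜 G] [NormedAddCommGroup E] [NormedSpace 𝕜 E]
    {φ : G → 𝕜} {x : G} {k : ℕ} (hφ : ContDiffAt 𝕜 k φ x) (v : E) :
    ‖iteratedFDeriv 𝕜 k (fun y => φ y • v) x‖ ≤ ‖iteratedFDeriv 𝕜 k φ x‖ * ‖v‖ := by
  have hcomp : (fun y => φ y • v) = ContinuousLinearMap.toSpanSingleton 𝕜 v ∘ φ := rfl
  rw [hcomp, ContinuousLinearMap.iteratedFDeriv_comp_left _ hφ le_rfl, mul_comm,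
    ← ContinuousLinearMap.norm_toSpanSingleton (𝕜 := 𝕜) v]
  exact ContinuousLinearMap.norm_compContinuousMultilinearMap_le _ _

theorem exists_pos_contDiff_tsum_smul {G E : Type*} [NormedAddCommGroup G] [NormedSpace ℝ G]
    [NormedAddCommGroup E] [NormedSpace ℝ E] [CompleteSpace E]
    (φ : ℕ → G → ℝ) (hφ : ∀ n, ContDiff ℝ ∞ (φ n))
    (hbdd : ∀ k n, ∃ C, ∀ x, ‖iteratedFDeriv ℝ k (φ n) x‖ ≤ C) :
    ∃ δ : ℕ → ℝ, (∀ n, 0 < δ n) ∧ ∀ v : ℕ → E, (∀ n, ‖v n‖ ≤ δ n) →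
      ContDiff ℝ ∞ fun x => ∑' n, φ n x • v n := by
  choose C hC using hbdd
  obtain ⟨δ, hδ, hsum⟩ := exists_pos_forall_summable_mul C
  refine ⟨δ, hδ, fun v hv => contDiff_tsum (v := fun k n => C k n * δ n)
    (fun n => (hφ n).smul contDiff_const) (fun k _ => hsum k) fun k n x _ => ?_⟩
  calc ‖iteratedFDeriv ℝ k (fun y => φ n y • v n) x‖
      ≤ ‖iteratedFDeriv ℝ k (φ n) x‖ * ‖v n‖ :=
        norm_iteratedFDeriv_smul_const_le ((hφ n).contDiffAt.of_le (by exact_mod_cast le_top)) _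
    _ ≤ C k n * δ n :=
        mul_le_mul (hC k n x) (hv n) (norm_nonneg _) ((norm_nonneg _).trans (hC k n x))

theorem exists_contDiff_interpolant_of_separated {G E : Type*} [NormedAddCommGroup G]
    [NormedSpace ℝ G] [FiniteDimensional ℝ G] [NormedAddCommGroup E] [NormedSpace ℝ E]
    [CompleteSpace E] (y : ℕ → G) (r : ℕ → ℝ) (hr : ∀ n, 0 < r n)
    (hsep : ∀ n j, n ≠ j → r n ≤ dist (y j) (y n)) :
    ∃ δ : ℕ → ℝ, (∀ n, 0 < δ n) ∧ ∀ v : ℕ → E, (∀ n, ‖v n‖ ≤ δ n) →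
      ∃ f : G → E, ContDiff ℝ ∞ f ∧ ∀ n, f (y n) = v n := by
  let φ : ∀ n, ContDiffBump (y n) := fun n => ⟨r n / 2, r n, half_pos (hr n), half_lt_self (hr n)⟩
  have hbdd : ∀ k n, ∃ C, ∀ x, ‖iteratedFDeriv ℝ k (φ n) x‖ ≤ C := fun k n =>
    ((φ n).contDiff.continuous_iteratedFDeriv (by exact_mod_cast le_top)
      ).bounded_above_of_compact_support ((φ n).hasCompactSupport.iteratedFDeriv k)
  obtain ⟨δ, hδ, hsmooth⟩ :=
    exists_pos_contDiff_tsum_smul (E := E) (fun n => φ n) (fun n => (φ n).contDiff) hbdd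
  refine ⟨δ, hδ, fun v hv => ⟨_, hsmooth v hv, fun j => ?_⟩⟩
  have hvanish : ∀ n ≠ j, φ n (y j) • v n = 0 := fun n hnj => by
    rw [(φ n).zero_of_le_dist (hsep n j hnj), zero_smul]
  rw [tsum_eq_single j hvanish, (φ j).one_of_mem_closedBall
    (Metric.mem_closedBall_self (half_pos (hr j)).le), one_smul]

theorem continuous_off_countable_general {p : ℕ} {E F : Type*}
    [NormedAddCommGroup E] [NormedSpace ℝ E] [CompleteSpace E]
    [NormedAddCommGroup F] [NormedSpace ℝ F]
    (X : Set (Fin p → ℝ)) (m : ℕ∞)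
    (Φ : (Fin p → ℝ) → E → F)
    (hmaps : ∀ f : (Fin p → ℝ) → E, ContDiffOn ℝ m f X →
      ContDiffOn ℝ m (fun x => Φ x (f x)) X)
    (hlin : ∀ f g : (Fin p → ℝ) → E, ContDiffOn ℝ m f X → ContDiffOn ℝ m g X →
      ∀ a b : ℝ, ∀ x ∈ X, Φ x (a • f x + b • g x) = a • Φ x (f x) + b • Φ x (g x))
    (K : Set (Fin p → ℝ)) (hK : K ⊆ X) (hKc : IsCompact K) :
    Set.Countable {x ∈ K | ¬ Continuous (Φ x)} := by
  have hΦlin : ∀ x ∈ X, IsLinearMap ℝ (Φ x) := fun x hx =>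
    ⟨fun u w => by
      simpa using hlin (fun _ => u) (fun _ => w) contDiffOn_const contDiffOn_const 1 1 x hx,
    fun a u => by simpa using hlin (fun _ => u) 0 contDiffOn_const contDiffOn_const a 0 x hx⟩
  by_contra hD
  obtain ⟨x₀, hx₀K, hacc⟩ := Set.Infinite.exists_accPt_of_subset_isCompact
    (fun hfin => hD hfin.countable) hKc fun x hx => hx.1
  obtain ⟨y, hyD, hy_lim, hy_sep⟩ := exists_seq_tendsto_separated_of_accPt hacc
  have hyX : ∀ n, y n ∈ X := fun n => hK (hyD n).1.1
  obtain ⟨δ, hδ, hinterp⟩ := exists_contDiff_interpolant_of_separated (E := E) y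
    (fun n => dist (y n) x₀ / 2) (fun n => half_pos (dist_pos.2 (hyD n).2)) hy_sep
  choose v hvδ hv using fun n => (hΦlin (y n) (hyX n)).exists_mem_ball_lt_norm_of_not_continuous
    (hyD n).1.2 (hδ n) n
  obtain ⟨f, hf, hfy⟩ := hinterp v fun n => (mem_ball_zero_iff.1 (hvδ n)).le
  have hTf : Tendsto (fun n => Φ (y n) (f (y n))) atTop (𝓝 (Φ x₀ (f x₀))) :=
    ((hmaps f (hf.of_le (by exact_mod_cast le_top)).contDiffOn).continuousOn x₀
      (hK hx₀K)).tendsto.comp (tendsto_nhdsWithin_iff.2 ⟨hy_lim, .of_forall hyX⟩)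
  refine not_tendsto_atTop_of_tendsto_nhds hTf.norm
    (tendsto_atTop_mono (fun n => ?_) tendsto_natCast_atTop_atTop)
  rw [hfy n]
  exact (hv n).le

theorem continuous_off_countable {p : ℕ} {E F : Type*}
    [NormedAddCommGroup E] [NormedSpace ℝ E] [CompleteSpace E]
    [NormedAddCommGroup F] [NormedSpace ℝ F] [CompleteSpace F]
    (X : Set (Fin p → ℝ)) (hX : IsOpen X) (m : ℕ∞)
    (Φ : (Fin p → ℝ) → E → F)
    (hmaps : ∀ f : (Fin p → ℝ) → E, ContDiffOn ℝ m f X →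
      ContDiffOn ℝ m (fun x => Φ x (f x)) X)
    (hlin : ∀ f g : (Fin p → ℝ) → E, ContDiffOn ℝ m f X → ContDiffOn ℝ m g X →
      ∀ a b : ℝ, ∀ x ∈ X, Φ x (a • f x + b • g x) = a • Φ x (f x) + b • Φ x (g x))
    (K : Set (Fin p → ℝ)) (hK : K ⊆ X) (hKc : IsCompact K) :
    Set.Countable {x ∈ K | ¬ Continuous (Φ x)} :=
  continuous_off_countable_general X m Φ hmaps hlin K hK hKc
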